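/- Let p_i, p_j be two distinct points, and let p, q be two distinct points both lying strictly on the right side of the directed line from p_i to p_j, with p_i, p_j, p, q in general position (no four cocircular, no three collinear). If q lies in the closed disk D(p_i, p, p_j), then p does not lie in the closed disk D(p_i, q, p_j). -/

import Mathlib

set_option maxHeartbeats 800000


/-- Signed area / cross product of `b - a` and `x - a`.  A point `x` lies strictly to the
right of the directed line from `a` to `b` iff `cross a b x < 0`. -/
def cross (a b x : EuclideanSpace ℝ (Fin 2)) : ℝ :=
  (b 0 - a 0) * (x 1 - a 1) - (b 1 - a 1) * (x 0 - a 0)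

lemma dist_sq_eq (x y : EuclideanSpace ℝ (Fin 2)) :
    dist x y ^ 2 = (x 0 - y 0) ^ 2 + (x 1 - y 1) ^ 2 := by
  rw [EuclideanSpace.dist_eq, Real.sq_sqrt (by positivity)]
  simp [Fin.sum_univ_two, Real.dist_eq, sq_abs]

lemma key_identity (a0 a1 b0 b1 p0 p1 q0 q1 x0 x1 y0 y1 r1 r2 : ℝ)
    (hA1 : (x0-a0)^2+(x1-a1)^2 = r1^2)
    (hA2 : (x0-p0)^2+(x1-p1)^2 = r1^2)
    (hA3 : (x0-b0)^2+(x1-b1)^2 = r1^2)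
    (hB1 : (y0-a0)^2+(y1-a1)^2 = r2^2)
    (hB2 : (y0-q0)^2+(y1-q1)^2 = r2^2)
    (hB3 : (y0-b0)^2+(y1-b1)^2 = r2^2) :
    ((b0-a0)^2+(b1-a1)^2) *
      (((y0-p0)^2+(y1-p1)^2 - r2^2) * ((b0-a0)*(q1-a1)-(b1-a1)*(q0-a0))
        + ((x0-q0)^2+(x1-q1)^2 - r1^2) * ((b0-a0)*(p1-a1)-(b1-a1)*(p0-a0))) = 0 := by
  set u := b0 - a0
  set v := b1 - a1
  set cp := u*(p1-a1)-v*(p0-a0)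
  set cq := u*(q1-a1)-v*(q0-a0)
  set dp := u*(p0-a0)+v*(p1-a1)
  set dq := u*(q0-a0)+v*(q1-a1)
  set S := u^2+v^2
  set C1 := S*(cq-cp)
  set C2 := dp*cq-dq*cp
  linear_combination (C2-C1)*hA1 + (C1-C2)*hB1 - C2*hA3 + C2*hB3 + S*cq*hA2 + S*cp*hB2

/-- Let `p ≠ q` both lie strictly to the right of the directed line `p_i → p_j`, with the
four points in general position (no three collinear, no four cocircular).  If `q` lies in
the closed disk `D(p_i, p, p_j)` (centered at `o₁`, radius `r₁`, boundary through
`p_i, p, p_j`), then `p` does not lie in the closed disk `D(p_i, q, p_j)` (centered at `o₂`,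
radius `r₂`, boundary through `p_i, q, p_j`). -/
theorem stmt14 (pi pj p q : EuclideanSpace ℝ (Fin 2)) (hij : pi ≠ pj) (hpq : p ≠ q)
    (hp : cross pi pj p < 0) (hq : cross pi pj q < 0)
    (hcol : ∀ a ∈ ({pi, pj, p, q} : Set (EuclideanSpace ℝ (Fin 2))),
      ∀ b ∈ ({pi, pj, p, q} : Set (EuclideanSpace ℝ (Fin 2))),
      ∀ c ∈ ({pi, pj, p, q} : Set (EuclideanSpace ℝ (Fin 2))), a ≠ b → b ≠ c → a ≠ c →
        ¬ Collinear ℝ ({a, b, c} : Set (EuclideanSpace ℝ (Fin 2))))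
    (hcirc : ¬ ∃ (o : EuclideanSpace ℝ (Fin 2)) (r : ℝ),
      dist o pi = r ∧ dist o pj = r ∧ dist o p = r ∧ dist o q = r)
    (o₁ o₂ : EuclideanSpace ℝ (Fin 2)) (r₁ r₂ : ℝ)
    (h1i : dist o₁ pi = r₁) (h1p : dist o₁ p = r₁) (h1j : dist o₁ pj = r₁)
    (h2i : dist o₂ pi = r₂) (h2q : dist o₂ q = r₂) (h2j : dist o₂ pj = r₂)
    (hqin : q ∈ Metric.closedBall o₁ r₁) :
    p ∉ Metric.closedBall o₂ r₂ := by
  have hr1 : 0 ≤ r₁ := by rw [← h1i]; exact dist_nonneg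
  have hr2 : 0 ≤ r₂ := by rw [← h2i]; exact dist_nonneg
  -- squared versions of the circle conditions
  have sq_of : ∀ (o z : EuclideanSpace ℝ (Fin 2)) (r : ℝ), dist o z = r →
      (o 0 - z 0)^2 + (o 1 - z 1)^2 = r^2 := by
    intro o z r h
    rw [← dist_sq_eq, h]
  have hA1 := sq_of _ _ _ h1i
  have hA2 := sq_of _ _ _ h1p
  have hA3 := sq_of _ _ _ h1j
  have hB1 := sq_of _ _ _ h2i
  have hB2 := sq_of _ _ _ h2q
  have hB3 := sq_of _ _ _ h2j
  -- q in the first disk, squared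
  have hqin' : (o₁ 0 - q 0)^2 + (o₁ 1 - q 1)^2 ≤ r₁^2 := by
    rw [← dist_sq_eq]
    have h : dist o₁ q ≤ r₁ := by
      rw [dist_comm]; exact Metric.mem_closedBall.mp hqin
    exact pow_le_pow_left₀ dist_nonneg h 2
  unfold cross at hp hq
  set cp := (pj 0 - pi 0) * (p 1 - pi 1) - (pj 1 - pi 1) * (p 0 - pi 0) with hcp
  set cq := (pj 0 - pi 0) * (q 1 - pi 1) - (pj 1 - pi 1) * (q 0 - pi 0) with hcq
  have hkey := key_identity (pi 0) (pi 1) (pj 0) (pj 1) (p 0) (p 1) (q 0) (q 1)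
    (o₁ 0) (o₁ 1) (o₂ 0) (o₂ 1) r₁ r₂ hA1 hA2 hA3 hB1 hB2 hB3
  have hS : 0 < (pj 0 - pi 0)^2 + (pj 1 - pi 1)^2 := by
    rcases lt_or_eq_of_le (by positivity : (0:ℝ) ≤ (pj 0 - pi 0)^2 + (pj 1 - pi 1)^2) with h | h
    · exact h
    · exfalso
      have hu2 : (pj 0 - pi 0)^2 = 0 := by
        have := sq_nonneg (pj 0 - pi 0); have := sq_nonneg (pj 1 - pi 1); linarith
      have hv2 : (pj 1 - pi 1)^2 = 0 := by
        have := sq_nonneg (pj 0 - pi 0); have := sq_nonneg (pj 1 - pi 1); linarith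
      have hu : pj 0 - pi 0 = 0 := by
        exact pow_eq_zero_iff two_ne_zero |>.mp hu2
      have hv : pj 1 - pi 1 = 0 := by
        exact pow_eq_zero_iff two_ne_zero |>.mp hv2
      rw [hcp, hu, hv] at hp
      simp at hp
  -- divide out the positive factor
  have hmain : ((o₂ 0 - p 0)^2 + (o₂ 1 - p 1)^2 - r₂^2) * cq
      + ((o₁ 0 - q 0)^2 + (o₁ 1 - q 1)^2 - r₁^2) * cp = 0 := by
    rcases mul_eq_zero.mp hkey with h | h
    · exact absurd h (ne_of_gt hS)
    · exact h
  set P2 := (o₂ 0 - p 0)^2 + (o₂ 1 - p 1)^2 - r₂^2 with hP2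
  set P1 := (o₁ 0 - q 0)^2 + (o₁ 1 - q 1)^2 - r₁^2 with hP1
  have hP1le : P1 ≤ 0 := by rw [hP1]; linarith
  rcases lt_or_eq_of_le hP1le with hP1lt | hP1eq
  · -- q strictly inside the first disk: then P2 > 0, so p outside second disk
    have hP2pos : 0 < P2 := by
      have e1 : 0 < P1 * cp := mul_pos_of_neg_of_neg hP1lt hp
      by_contra hc
      push_neg at hc
      have e2 := mul_nonneg (neg_nonneg.mpr hc) (neg_nonneg.mpr hq.le)
      have e3 : -P2 * -cq = P2 * cq := by ring
      linarith
    intro hmem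
    have h : dist o₂ p ≤ r₂ := by rw [dist_comm]; exact Metric.mem_closedBall.mp hmem
    have h2 : dist o₂ p ^ 2 ≤ r₂^2 := pow_le_pow_left₀ dist_nonneg h 2
    rw [dist_sq_eq] at h2
    rw [hP2] at hP2pos
    linarith
  · -- q on the first circle: all four points cocircular, contradiction
    exfalso
    apply hcirc
    refine ⟨o₁, r₁, h1i, h1j, h1p, ?_⟩
    have hsq : dist o₁ q ^ 2 = r₁ ^ 2 := by
      rw [dist_sq_eq]; rw [hP1] at hP1eq; linarith
    calc dist o₁ q = Real.sqrt (dist o₁ q ^ 2) := (Real.sqrt_sq dist_nonneg).symm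
      _ = Real.sqrt (r₁ ^ 2) := by rw [hsq]
      _ = r₁ := Real.sqrt_sq hr1
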